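/- Let f: ℝ^n → ℝ be differentiable, 0 < m ≤ M, and suppose f(y) ≤ f(x) + ⟨∇f(x), y − x⟩ + (M/2)‖y − x‖₂² and f(y) ≥ f(x) + ⟨∇f(x), y − x⟩ + (m/2)‖y − x‖₂² for all x, y ∈ ℝ^n, and that f attains its minimum value f* at x*. If x⁺ ∈ ℝ^n satisfies f(x⁺) ≤ f(x − (1/M)∇f(x)), then f(x⁺) − f* ≤ (1 − m/M)(f(x) − f*). -/

import Mathlib

open scoped RealInnerProductSpace

/-!
The step `x - (1/M) ∇f(x)` minimises the quadratic upper model at `x`, which lowers `f` by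
`‖∇f(x)‖² / (2M)`; minimising the quadratic lower model shows `f(x) - f* ≤ ‖∇f(x)‖² / (2m)`
(the Polyak–Łojasiewicz inequality). Together the decrease is at least `(m/M)(f(x) - f*)`.
-/

section QuadraticModel

variable {E : Type*} [NormedAddCommGroup E] [InnerProductSpace ℝ E]

/-- Valid for every `M`, including the junk case `M = 0` where both sides vanish. -/
lemma inner_add_mul_norm_sq_at_gradient_step (x g : E) (M : ℝ) :
    ⟪g, (x - (1 / M) • g) - x⟫ + M / 2 * ‖(x - (1 / M) • g) - x‖ ^ 2 = -(‖g‖ ^ 2 / (2 * M)) := by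
  rw [sub_sub_cancel_left, inner_neg_right, real_inner_smul_right, real_inner_self_eq_norm_sq,
    norm_neg, norm_smul, Real.norm_eq_abs, mul_pow, sq_abs]
  rcases eq_or_ne M 0 with rfl | hM
  · simp
  · field_simp
    ring

lemma neg_norm_sq_div_le_inner_add_mul_norm_sq {m : ℝ} (hm : 0 < m) (g d : E) :
    -(‖g‖ ^ 2 / (2 * m)) ≤ ⟪g, d⟫ + m / 2 * ‖d‖ ^ 2 := by
  have hsq : 0 ≤ ‖g + m • d‖ ^ 2 := sq_nonneg _
  rw [norm_add_sq_real, inner_smul_right, norm_smul, Real.norm_eq_abs, mul_pow, sq_abs] at hsq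
  rw [neg_le_iff_add_nonneg']
  have : ‖g‖ ^ 2 / (2 * m) + (⟪g, d⟫ + m / 2 * ‖d‖ ^ 2) =
      (‖g‖ ^ 2 + 2 * (m * ⟪g, d⟫) + m ^ 2 * ‖d‖ ^ 2) / (2 * m) := by
    field_simp
    ring
  rw [this]
  positivity

variable {f : E → ℝ} {x g : E}

lemma le_sub_norm_sq_div_of_quadratic_upper_bound {M : ℝ}
    (hsmooth : ∀ y, f y ≤ f x + ⟪g, y - x⟫ + M / 2 * ‖y - x‖ ^ 2) :
    f (x - (1 / M) • g) ≤ f x - ‖g‖ ^ 2 / (2 * M) := by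
  have h := hsmooth (x - (1 / M) • g)
  rw [add_assoc, inner_add_mul_norm_sq_at_gradient_step] at h
  linarith

lemma sub_norm_sq_div_le_of_quadratic_lower_bound {m : ℝ} (hm : 0 < m)
    (hstrong : ∀ y, f x + ⟪g, y - x⟫ + m / 2 * ‖y - x‖ ^ 2 ≤ f y) (y : E) :
    f x - ‖g‖ ^ 2 / (2 * m) ≤ f y := by
  have h := neg_norm_sq_div_le_inner_add_mul_norm_sq hm g (y - x)
  linarith [hstrong y]

end QuadraticModel

theorem one_step_linear_contraction_general {n : ℕ}
    (f : EuclideanSpace ℝ (Fin n) → ℝ)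
    (m M : ℝ) (hm : 0 < m) (hmM : m ≤ M)
    (hsmooth : ∀ x y : EuclideanSpace ℝ (Fin n),
      f y ≤ f x + ⟪gradient f x, y - x⟫ + M / 2 * ‖y - x‖ ^ 2)
    (hstrong : ∀ x y : EuclideanSpace ℝ (Fin n),
      f x + ⟪gradient f x, y - x⟫ + m / 2 * ‖y - x‖ ^ 2 ≤ f y)
    (xstar : EuclideanSpace ℝ (Fin n))
    (x xplus : EuclideanSpace ℝ (Fin n))
    (hstep : f xplus ≤ f (x - (1 / M) • gradient f x)) :
    f xplus - f xstar ≤ (1 - m / M) * (f x - f xstar) := by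
  have hM : 0 < M := hm.trans_le hmM
  set G := ‖gradient f x‖ ^ 2
  have hdescent : f xplus ≤ f x - G / (2 * M) :=
    hstep.trans (le_sub_norm_sq_div_of_quadratic_upper_bound (hsmooth x))
  have hPL : f x - f xstar ≤ G / (2 * m) := by
    linarith [sub_norm_sq_div_le_of_quadratic_lower_bound hm (hstrong x) xstar]
  calc f xplus - f xstar ≤ (f x - f xstar) - m / M * (G / (2 * m)) := by
        have : m / M * (G / (2 * m)) = G / (2 * M) := by field_simp
        linarith
    _ ≤ (f x - f xstar) - m / M * (f x - f xstar) := by gcongr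
    _ = (1 - m / M) * (f x - f xstar) := by ring

/-- One-step contraction: under `m`-strong convexity and
`M`-smoothness (quadratic lower/upper bounds), if `f(x⁺) ≤ f(x − (1/M)∇f(x))`
then `f(x⁺) − f* ≤ (1 − m/M)(f(x) − f*)`. -/
theorem one_step_linear_contraction {n : ℕ}
    (f : EuclideanSpace ℝ (Fin n) → ℝ) (hf : Differentiable ℝ f)
    (m M : ℝ) (hm : 0 < m) (hmM : m ≤ M)
    (hsmooth : ∀ x y : EuclideanSpace ℝ (Fin n),
      f y ≤ f x + ⟪gradient f x, y - x⟫ + M / 2 * ‖y - x‖ ^ 2)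
    (hstrong : ∀ x y : EuclideanSpace ℝ (Fin n),
      f x + ⟪gradient f x, y - x⟫ + m / 2 * ‖y - x‖ ^ 2 ≤ f y)
    (xstar : EuclideanSpace ℝ (Fin n))
    (hmin : ∀ y : EuclideanSpace ℝ (Fin n), f xstar ≤ f y)
    (x xplus : EuclideanSpace ℝ (Fin n))
    (hstep : f xplus ≤ f (x - (1 / M) • gradient f x)) :
    f xplus - f xstar ≤ (1 - m / M) * (f x - f xstar) :=
  one_step_linear_contraction_general f m M hm hmM hsmooth hstrong xstar x xplus hstep
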